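/- arXiv:2604.12265 — 6 statements merged into one kernel-verified Lean document; each statement's English description precedes it below -/
import Mathlib

section
/- If Q is a quadratic module in a commutative unital ℝ-algebra A and a ∈ A satisfies λ² - a² ∈ Q for some λ > 0, then λ + a ∈ Q and λ - a ∈ Q. -/
/-- A quadratic module in a commutative unital ℝ-algebra. -/
structure IsQuadraticModule {A : Type*} [CommRing A] [Algebra ℝ A] (Q : Set A) : Prop where
  add_mem : ∀ p ∈ Q, ∀ q ∈ Q, p + q ∈ Q
  one_mem : (1 : A) ∈ Q
  sq_mul_mem : ∀ (a : A), ∀ q ∈ Q, a ^ 2 * q ∈ Q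

lemma smul_nonneg_mem {A : Type*} [CommRing A] [Algebra ℝ A]
    {Q : Set A} (hQ : IsQuadraticModule Q) {c : ℝ} (hc : 0 ≤ c)
    {q : A} (hq : q ∈ Q) : algebraMap ℝ A c * q ∈ Q := by
  have : algebraMap ℝ A c = (algebraMap ℝ A (Real.sqrt c)) ^ 2 := by
    rw [← map_pow, Real.sq_sqrt hc]
  rw [this]
  exact hQ.sq_mul_mem _ _ hq

theorem bounded_of_sq_diff_mem {A : Type*} [CommRing A] [Algebra ℝ A]
    {Q : Set A} (hQ : IsQuadraticModule Q) (a : A) (l : ℝ) (hl : 0 < l)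
    (h : algebraMap ℝ A (l ^ 2) - a ^ 2 ∈ Q) :
    algebraMap ℝ A l + a ∈ Q ∧ algebraMap ℝ A l - a ∈ Q := by
  have hc : (0:ℝ) ≤ 1 / (2 * l) := by positivity
  have hsq : ∀ b : A, b ^ 2 ∈ Q := fun b => by
    simpa using hQ.sq_mul_mem b 1 hQ.one_mem
  set c := algebraMap ℝ A (1 / (2 * l)) with hcdef
  set s := algebraMap ℝ A l with hsdef
  have e1 : c * s = algebraMap ℝ A (1/2) := by
    rw [hcdef, hsdef, ← map_mul]; congr 1; field_simp
  have e2 : algebraMap ℝ A (l ^ 2) = s * s := by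
    rw [hsdef, ← map_mul, sq]
  have e3 : (2 : A) * algebraMap ℝ A (1/2) = 1 := by
    have : (2 : A) = algebraMap ℝ A 2 := by rw [map_ofNat]
    rw [this, ← map_mul]; norm_num
  constructor
  · have h2 := smul_nonneg_mem hQ hc (hQ.add_mem _ h _ (hsq (s + a)))
    have key : c * ((algebraMap ℝ A (l ^ 2) - a ^ 2) + (s + a) ^ 2) = s + a := by
      linear_combination c * e2 + (2*s + 2*a) * e1 + (s + a) * e3
    rwa [key] at h2
  · have h2 := smul_nonneg_mem hQ hc (hQ.add_mem _ h _ (hsq (s - a)))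
    have key : c * ((algebraMap ℝ A (l ^ 2) - a ^ 2) + (s - a) ^ 2) = s - a := by
      linear_combination c * e2 + (2*s - 2*a) * e1 + (s - a) * e3
    rwa [key] at h2
end

section
/- Let Q be a quadratic module in a commutative unital ℝ-algebra A. The set A_b(Q) of Q-bounded elements, i.e. elements a such that λ + a ∈ Q and λ - a ∈ Q for some λ > 0, is closed under multiplication. -/
/-- The set of `Q`-bounded elements. -/
def boundedElements {A : Type*} [CommRing A] [Algebra ℝ A] (Q : Set A) : Set A :=
  {a : A | ∃ l : ℝ, 0 < l ∧ algebraMap ℝ A l + a ∈ Q ∧ algebraMap ℝ A l - a ∈ Q}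

lemma aux_pos_smul {A : Type*} [CommRing A] [Algebra ℝ A] {Q : Set A}
    (hQ : IsQuadraticModule Q) {c : ℝ} (hc : 0 < c) {q : A} (hq : q ∈ Q) :
    algebraMap ℝ A c * q ∈ Q := by
  have : algebraMap ℝ A c * q = (algebraMap ℝ A (Real.sqrt c)) ^ 2 * q := by
    rw [← map_pow, Real.sq_sqrt hc.le]
  rw [this]
  exact hQ.sq_mul_mem _ _ hq

lemma aux_sq_sub {A : Type*} [CommRing A] [Algebra ℝ A] {Q : Set A}
    (hQ : IsQuadraticModule Q) {l : ℝ} (hl : 0 < l) {a : A}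
    (hp : algebraMap ℝ A l + a ∈ Q) (hm : algebraMap ℝ A l - a ∈ Q) :
    (algebraMap ℝ A l) ^ 2 - a ^ 2 ∈ Q := by
  set c := algebraMap ℝ A l with hc
  have key : algebraMap ℝ A (1 / (2 * l)) * (2 * c) = 1 := by
    rw [hc, show (2 : A) = algebraMap ℝ A 2 from (map_ofNat (algebraMap ℝ A) 2).symm, ← map_mul, ← map_mul]
    rw [show 1 / (2 * l) * (2 * l) = 1 by field_simp]
    simp
  have hE : (c - a) ^ 2 * (c + a) + (c + a) ^ 2 * (c - a) ∈ Q :=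
    hQ.add_mem _ (hQ.sq_mul_mem _ _ hp) _ (hQ.sq_mul_mem _ _ hm)
  have hE2 := aux_pos_smul hQ (by positivity : (0:ℝ) < 1 / (2 * l)) hE
  have : c ^ 2 - a ^ 2 =
      algebraMap ℝ A (1 / (2 * l)) * ((c - a) ^ 2 * (c + a) + (c + a) ^ 2 * (c - a)) := by
    linear_combination -(c ^ 2 - a ^ 2) * key
  rw [this]
  exact hE2

lemma aux_of_sq_sub {A : Type*} [CommRing A] [Algebra ℝ A] {Q : Set A}
    (hQ : IsQuadraticModule Q) {l : ℝ} (hl : 0 < l) {x : A}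
    (h : (algebraMap ℝ A l) ^ 2 - x ^ 2 ∈ Q) :
    algebraMap ℝ A l + x ∈ Q ∧ algebraMap ℝ A l - x ∈ Q := by
  set c := algebraMap ℝ A l with hc
  have key : algebraMap ℝ A (1 / (2 * l)) * (2 * c) = 1 := by
    rw [hc, show (2 : A) = algebraMap ℝ A 2 from (map_ofNat (algebraMap ℝ A) 2).symm, ← map_mul, ← map_mul]
    rw [show 1 / (2 * l) * (2 * l) = 1 by field_simp]
    simp
  constructor
  · have hmem : (c + x) ^ 2 * 1 + (c ^ 2 - x ^ 2) ∈ Q :=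
      hQ.add_mem _ (hQ.sq_mul_mem _ _ hQ.one_mem) _ h
    have hmem2 := aux_pos_smul hQ (by positivity : (0:ℝ) < 1 / (2 * l)) hmem
    have : c + x = algebraMap ℝ A (1 / (2 * l)) * ((c + x) ^ 2 * 1 + (c ^ 2 - x ^ 2)) := by
      linear_combination -(c + x) * key
    rw [this]; exact hmem2
  · have hmem : (c - x) ^ 2 * 1 + (c ^ 2 - x ^ 2) ∈ Q :=
      hQ.add_mem _ (hQ.sq_mul_mem _ _ hQ.one_mem) _ h
    have hmem2 := aux_pos_smul hQ (by positivity : (0:ℝ) < 1 / (2 * l)) hmem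
    have : c - x = algebraMap ℝ A (1 / (2 * l)) * ((c - x) ^ 2 * 1 + (c ^ 2 - x ^ 2)) := by
      linear_combination -(c - x) * key
    rw [this]; exact hmem2

theorem boundedElements_mul_mem {A : Type*} [CommRing A] [Algebra ℝ A]
    {Q : Set A} (hQ : IsQuadraticModule Q) {a b : A}
    (ha : a ∈ boundedElements Q) (hb : b ∈ boundedElements Q) :
    a * b ∈ boundedElements Q := by
  obtain ⟨l, hl, hlp, hlm⟩ := ha
  obtain ⟨m, hm, hmp, hmm⟩ := hb
  have h1 := aux_sq_sub hQ hl hlp hlm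
  have h2 := aux_sq_sub hQ hm hmp hmm
  have h3 : (algebraMap ℝ A (l * m)) ^ 2 - (a * b) ^ 2 ∈ Q := by
    have hsum : (algebraMap ℝ A m) ^ 2 * ((algebraMap ℝ A l) ^ 2 - a ^ 2)
        + a ^ 2 * ((algebraMap ℝ A m) ^ 2 - b ^ 2) ∈ Q :=
      hQ.add_mem _ (hQ.sq_mul_mem _ _ h1) _ (hQ.sq_mul_mem _ _ h2)
    have : (algebraMap ℝ A (l * m)) ^ 2 - (a * b) ^ 2 =
        (algebraMap ℝ A m) ^ 2 * ((algebraMap ℝ A l) ^ 2 - a ^ 2)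
        + a ^ 2 * ((algebraMap ℝ A m) ^ 2 - b ^ 2) := by
      rw [map_mul]; ring
    rw [this]; exact hsum
  obtain ⟨hp, hm'⟩ := aux_of_sq_sub hQ (mul_pos hl hm) h3
  exact ⟨l * m, mul_pos hl hm, hp, hm'⟩
end

section
/- Let Q be a quadratic module in a commutative unital ℝ-algebra A. The set A_b(Q) of Q-bounded elements is a unital subalgebra of A. -/
/-- The `Q`-bounded elements form a unital ℝ-subalgebra of `A`. -/
theorem boundedElements_isSubalgebra {A : Type*} [CommRing A] [Algebra ℝ A]
    {Q : Set A} (hQ : IsQuadraticModule Q) :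
    ∃ S : Subalgebra ℝ A, (S : Set A) = boundedElements Q := by
  set φ := algebraMap ℝ A with hφ
  -- nonnegative scalars act on Q
  have hscale : ∀ c : ℝ, 0 ≤ c → ∀ q ∈ Q, φ c * q ∈ Q := by
    intro c hc q hq
    have h : φ c = (φ (Real.sqrt c)) ^ 2 := by
      rw [← map_pow, Real.sq_sqrt hc]
    rw [h]
    exact hQ.sq_mul_mem _ q hq
  have hconst : ∀ c : ℝ, 0 ≤ c → φ c ∈ Q := fun c hc => by
    simpa using hscale c hc 1 hQ.one_mem
  -- scalars are bounded
  have halg : ∀ c : ℝ, φ c ∈ boundedElements Q := by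
    intro c
    refine ⟨|c| + 1, by positivity, ?_, ?_⟩
    · rw [← map_add]; exact hconst _ (by rcases abs_cases c with ⟨h1, h2⟩ | ⟨h1, h2⟩ <;> linarith)
    · rw [← map_sub]; exact hconst _ (by rcases abs_cases c with ⟨h1, h2⟩ | ⟨h1, h2⟩ <;> linarith)
  -- closure under addition
  have hadd : ∀ a ∈ boundedElements Q, ∀ b ∈ boundedElements Q, a + b ∈ boundedElements Q := by
    rintro a ⟨l, hl, h1, h2⟩ b ⟨m, hm, h3, h4⟩
    refine ⟨l + m, by linarith, ?_, ?_⟩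
    · have := hQ.add_mem _ h1 _ h3
      rw [map_add]; convert this using 1; ring
    · have := hQ.add_mem _ h2 _ h4
      rw [map_add]; convert this using 1; ring
  -- closure under negation
  have hneg : ∀ a ∈ boundedElements Q, -a ∈ boundedElements Q := by
    rintro a ⟨l, hl, h1, h2⟩
    exact ⟨l, hl, by simpa [sub_eq_add_neg] using h2, by simpa [sub_eq_add_neg] using h1⟩
  -- closure under nonnegative scalar multiplication
  have hsmul0 : ∀ c : ℝ, 0 ≤ c → ∀ a ∈ boundedElements Q, φ c * a ∈ boundedElements Q := by
    rintro c hc a ⟨l, hl, h1, h2⟩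
    refine ⟨(c + 1) * l, by positivity, ?_, ?_⟩
    · have := hQ.add_mem _ (hscale c hc _ h1) _ (hconst l hl.le)
      convert this using 1
      rw [map_mul, map_add, map_one]; ring
    · have := hQ.add_mem _ (hscale c hc _ h2) _ (hconst l hl.le)
      convert this using 1
      rw [map_mul, map_add, map_one]; ring
  -- closure under arbitrary scalar multiplication
  have hsmul : ∀ c : ℝ, ∀ a ∈ boundedElements Q, φ c * a ∈ boundedElements Q := by
    intro c a ha
    rcases le_or_gt 0 c with hc | hc
    · exact hsmul0 c hc a ha
    · have := hneg _ (hsmul0 (-c) (by linarith) a ha)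
      simpa using this
  -- closure under squaring
  have hsq : ∀ a ∈ boundedElements Q, a ^ 2 ∈ boundedElements Q := by
    rintro a ⟨l, hl, h1, h2⟩
    refine ⟨l ^ 2, by positivity, ?_, ?_⟩
    · have := hQ.add_mem _ (hconst (l ^ 2) (by positivity)) _
        (by simpa using hQ.sq_mul_mem a 1 hQ.one_mem)
      simpa using this
    · have hsum := hQ.add_mem _ (hQ.sq_mul_mem (φ l + a) _ h2) _ (hQ.sq_mul_mem (φ l - a) _ h1)
      have hmem := hscale ((2 * l)⁻¹) (by positivity) _ hsum
      have e1 : φ ((2 * l)⁻¹) * (2 * φ l) = 1 := by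
        rw [show (2 : A) * φ l = φ (2 * l) by rw [map_mul, map_ofNat], ← map_mul,
          inv_mul_cancel₀ (by positivity), map_one]
      have key : φ (l ^ 2) - a ^ 2 =
          φ ((2 * l)⁻¹) * ((φ l + a) ^ 2 * (φ l - a) + (φ l - a) ^ 2 * (φ l + a)) := by
        calc φ (l ^ 2) - a ^ 2
            = (φ ((2 * l)⁻¹) * (2 * φ l)) * ((φ l) ^ 2 - a ^ 2) := by
              rw [e1, one_mul, map_pow]
          _ = φ ((2 * l)⁻¹) * ((φ l + a) ^ 2 * (φ l - a) + (φ l - a) ^ 2 * (φ l + a)) := by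
              ring
      rw [key]; exact hmem
  -- closure under multiplication
  have hmul : ∀ a ∈ boundedElements Q, ∀ b ∈ boundedElements Q, a * b ∈ boundedElements Q := by
    intro a ha b hb
    have h1 : (a + b) ^ 2 ∈ boundedElements Q := hsq _ (hadd a ha b hb)
    have hab : a - b ∈ boundedElements Q := by
      rw [sub_eq_add_neg]; exact hadd a ha (-b) (hneg b hb)
    have h2 : (a - b) ^ 2 ∈ boundedElements Q := hsq _ hab
    have e : a * b = φ (4⁻¹) * ((a + b) ^ 2 + -((a - b) ^ 2)) := by
      have e4 : φ (4⁻¹) * (4 : A) = 1 := by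
        rw [(map_ofNat φ 4).symm, ← map_mul, inv_mul_cancel₀ (by norm_num), map_one]
      calc a * b = (φ (4⁻¹) * (4 : A)) * (a * b) := by rw [e4, one_mul]
        _ = φ (4⁻¹) * ((a + b) ^ 2 + -((a - b) ^ 2)) := by ring
    rw [e]
    exact hsmul _ _ (hadd _ h1 _ (hneg _ h2))
  refine ⟨{ carrier := boundedElements Q,
            mul_mem' := fun ha hb => hmul _ ha _ hb,
            add_mem' := fun ha hb => hadd _ ha _ hb,
            one_mem' := by simpa using halg 1,
            zero_mem' := by simpa using halg 0,
            algebraMap_mem' := halg }, rfl⟩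
end

section
/- Let Q be a quadratic module in a commutative unital ℝ-algebra A such that 1 is an algebraic interior point of Q, and let a₀ ∈ A \ Q. Then there exists a linear functional φ : A → ℝ with φ(Q) ⊆ [0,∞), φ(1) = 1, and φ(a₀) ≤ 0. -/
/-!
A quadratic module is a convex cone, and the interiority of `1` makes `1` an order unit for it.
The functional `t • 1 ↦ t` on `ℝ ∙ 1` is nonnegative on the larger cone `Q + ℝ≥0 • (-a₀)`: a
negative multiple of `1` in that cone would put `a₀` into `Q`, or `-1` into `Q` and then all of
`A` into `Q`. Since `1` is an order unit, the M. Riesz extension theorem extends it to a functional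
on `A` that is nonnegative on this cone, hence on `Q` and at `-a₀`.
-/

namespace PointedCone

variable {E : Type*} [AddCommGroup E] [Module ℝ E]

def IsOrderUnit (C : PointedCone ℝ E) (e : E) : Prop :=
  ∀ y, ∃ r : ℝ, 0 ≤ r ∧ r • e - y ∈ C

variable {C : PointedCone ℝ E} {e a : E}

theorem IsOrderUnit.eq_top_of_neg_mem (h : C.IsOrderUnit e) (hneg : -e ∈ C) : C = ⊤ := by
  refine eq_top_iff.2 fun y _ ↦ ?_
  obtain ⟨r, hr, hy⟩ := h (-y)
  have hy' : y = (r • e - -y) + r • -e := by module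
  rw [hy']
  exact C.add_mem hy (C.smul_mem hr hneg)

theorem IsOrderUnit.neg_notMem (h : C.IsOrderUnit e) (ha : a ∉ C) : -e ∉ C :=
  fun hneg ↦ ha (h.eq_top_of_neg_mem hneg ▸ Submodule.mem_top)

theorem IsOrderUnit.nonneg_of_smul_mem_sup_hull_neg (h : C.IsOrderUnit e) (he : e ∈ C)
    (ha : a ∉ C) {t : ℝ} (ht : t • e ∈ C ⊔ hull ℝ {-a}) : 0 ≤ t := by
  by_contra! htneg
  obtain ⟨q, hq, z, hz, hqz⟩ := Submodule.mem_sup.1 ht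
  obtain ⟨⟨c, hc⟩, rfl⟩ := Submodule.mem_span_singleton.1 hz
  change q + c • -a = t • e at hqz
  rcases hc.eq_or_lt with rfl | hc
  · have hneg : -e = (-t)⁻¹ • q := by
      rw [zero_smul, add_zero] at hqz
      rw [hqz, smul_smul, inv_neg, neg_mul, inv_mul_cancel₀ htneg.ne, neg_one_smul]
    exact h.neg_notMem ha (hneg ▸ C.smul_mem (by simpa using htneg.le) hq)
  · have hac : a = c⁻¹ • (q + (-t) • e) := by
      rw [neg_smul, ← hqz, smul_neg, neg_add, neg_neg, add_neg_cancel_left, smul_smul,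
        inv_mul_cancel₀ hc.ne', one_smul]
    exact ha (hac ▸ C.smul_mem (inv_nonneg.2 hc.le)
      (C.add_mem hq (C.smul_mem (neg_nonneg.2 htneg.le) he)))

theorem IsOrderUnit.exists_nonneg_dual_of_notMem (h : C.IsOrderUnit e) (he : e ∈ C)
    (ha : a ∉ C) : ∃ φ : E →ₗ[ℝ] ℝ, (∀ x ∈ C, 0 ≤ φ x) ∧ φ e = 1 ∧ φ a ≤ 0 := by
  have he0 : e ≠ 0 := by
    rintro rfl
    exact h.neg_notMem ha (by simp)
  let f : E →ₗ.[ℝ] ℝ := LinearPMap.mkSpanSingleton e 1 he0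
  have nonneg : ∀ x : f.domain, (x : E) ∈ C ⊔ hull ℝ {-a} → 0 ≤ f x := by
    rintro ⟨x, hx⟩ hxC
    obtain ⟨t, rfl⟩ := Submodule.mem_span_singleton.1 hx
    rw [LinearPMap.mkSpanSingleton'_apply, smul_eq_mul, mul_one]
    exact h.nonneg_of_smul_mem_sup_hull_neg he ha hxC
  have dense : ∀ y, ∃ x : f.domain, (x : E) + y ∈ C ⊔ hull ℝ {-a} := by
    intro y
    obtain ⟨r, -, hy⟩ := h (-y)
    refine ⟨⟨r • e, Submodule.smul_mem _ r (Submodule.mem_span_singleton_self e)⟩, ?_⟩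
    exact le_sup_left (a := C) (by simpa only [sub_neg_eq_add] using hy)
  obtain ⟨φ, hφf, hφ⟩ := riesz_extension _ f nonneg dense
  refine ⟨φ, fun x hx ↦ hφ x (le_sup_left (a := C) hx), ?_, ?_⟩
  · rw [hφf ⟨e, Submodule.mem_span_singleton_self e⟩, LinearPMap.mkSpanSingleton_apply]
  · simpa using hφ (-a) (le_sup_right (a := C) (subset_hull rfl))

end PointedCone

namespace IsQuadraticModule

variable {A : Type*} [CommRing A] [Algebra ℝ A] {Q : Set A}

theorem smul_mem (hQ : IsQuadraticModule Q) {t : ℝ} (ht : 0 ≤ t) {q : A} (hq : q ∈ Q) :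
    t • q ∈ Q := by
  have hsq : (Real.sqrt t • (1 : A)) ^ 2 * q = t • q := by
    rw [smul_pow, one_pow, Real.sq_sqrt ht, smul_mul_assoc, one_mul]
  exact hsq ▸ hQ.sq_mul_mem _ q hq

def toPointedCone (hQ : IsQuadraticModule Q) : PointedCone ℝ A where
  carrier := Q
  add_mem' hp hq := hQ.add_mem _ hp _ hq
  zero_mem' := by simpa using hQ.smul_mem le_rfl hQ.one_mem
  smul_mem' c _ hq := hQ.smul_mem c.2 hq

theorem isOrderUnit_one (hQ : IsQuadraticModule Q)
    (hInt : ∀ a : A, ∃ δ : ℝ, 0 < δ ∧ ∀ t : ℝ, |t| ≤ δ → (1 : A) + t • a ∈ Q) :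
    hQ.toPointedCone.IsOrderUnit 1 := by
  intro y
  obtain ⟨δ, hδ, hδQ⟩ := hInt (-y)
  refine ⟨δ⁻¹, by positivity, ?_⟩
  have hy : δ⁻¹ • (1 : A) - y = δ⁻¹ • (1 + δ • -y) := by
    rw [smul_add, smul_smul, inv_mul_cancel₀ hδ.ne', one_smul, sub_eq_add_neg]
  rw [hy]
  exact hQ.smul_mem (by positivity) (hδQ δ (abs_of_pos hδ).le)

end IsQuadraticModule

/-- Separation of a point from a quadratic module whose unit is an
algebraic interior point. -/
theorem separation_from_quadraticModule {A : Type*} [CommRing A] [Algebra ℝ A]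
    {Q : Set A} (hQ : IsQuadraticModule Q)
    (hInt : ∀ a : A, ∃ δ : ℝ, 0 < δ ∧ ∀ t : ℝ, |t| ≤ δ → (1 : A) + t • a ∈ Q)
    {a₀ : A} (ha₀ : a₀ ∉ Q) :
    ∃ φ : A →ₗ[ℝ] ℝ, (∀ q ∈ Q, 0 ≤ φ q) ∧ φ 1 = 1 ∧ φ a₀ ≤ 0 :=
  (hQ.isOrderUnit_one hInt).exists_nonneg_dual_of_notMem hQ.one_mem ha₀
end

section
/- A nonzero polynomial p ∈ ℝ[x] is nonnegative on all of ℝ if and only if p is a sum of two squares of polynomials in ℝ[x]. -/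
/-!
Induct on the degree. A nonconstant `p ≥ 0` has a complex root `z`. If `z` is real, it is a
minimum of `p`, hence a root of `p'` as well, so `(X - z)²` divides `p`; otherwise
`(X - Re z)² + (Im z)²` divides `p`. Either way `p = q * s` with `q` a sum of two squares of
positive degree, `s ≥ 0` off the finitely many roots of `q` and hence everywhere by continuity,
and the two-square identity `(a² + b²)(c² + d²) = (ac - bd)² + (ad + bc)²` finishes the
induction.
-/

open Polynomial

theorem exists_sq_add_sq_mul {R : Type*} [CommRing R] {p q : R}
    (hp : ∃ a b, p = a ^ 2 + b ^ 2) (hq : ∃ c d, q = c ^ 2 + d ^ 2) :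
    ∃ a b, p * q = a ^ 2 + b ^ 2 := by
  obtain ⟨a, b, rfl⟩ := hp
  obtain ⟨c, d, rfl⟩ := hq
  exact ⟨_, _, sq_add_sq_mul_sq_add_sq⟩

namespace Polynomial

theorem eval_sq_add_sq_nonneg {R : Type*} [CommRing R] [LinearOrder R] [IsStrictOrderedRing R]
    (a b : R[X]) (x : R) : 0 ≤ (a ^ 2 + b ^ 2).eval x := by
  simp only [eval_add, eval_pow]
  positivity

theorem sq_dvd_of_isRoot_of_nonneg {p : ℝ[X]} (hnn : ∀ x, 0 ≤ p.eval x) {r : ℝ}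
    (hr : p.IsRoot r) : (X - C r) ^ 2 ∣ p := by
  rcases eq_or_ne p 0 with rfl | hp
  · exact dvd_zero _
  have hmin : IsLocalMin (fun x => p.eval x) r :=
    Filter.Eventually.of_forall fun x => show p.eval r ≤ p.eval x from hr.eq_zero ▸ hnn x
  have hder : p.derivative.IsRoot r := by
    rw [IsRoot, ← Polynomial.deriv]
    exact hmin.deriv_eq_zero
  exact (le_rootMultiplicity_iff hp).mp ((one_lt_rootMultiplicity_iff_isRoot hp).mpr ⟨hr, hder⟩)

theorem eval_nonneg_of_mul_nonneg {q s : ℝ[X]} (hq0 : q ≠ 0) (hq : ∀ x, 0 ≤ q.eval x)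
    (hqs : ∀ x, 0 ≤ (q * s).eval x) (x : ℝ) : 0 ≤ s.eval x := by
  have hdense : Dense {y | q.IsRoot y}ᶜ :=
    (finite_setOfPred_isRoot hq0).countable.dense_compl ℝ
  refine hdense.induction (fun y hy => ?_) (isClosed_le continuous_const s.continuous) x
  have hqy : 0 < q.eval y := (hq y).lt_of_ne (Ne.symm hy)
  exact nonneg_of_mul_nonneg_right (by simpa only [eval_mul] using hqs y) hqy

theorem exists_sq_add_sq_dvd_of_nonneg {p : ℝ[X]} (hnn : ∀ x, 0 ≤ p.eval x)
    (hdeg : 0 < p.natDegree) :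
    ∃ a b : ℝ[X], 0 < (a ^ 2 + b ^ 2).natDegree ∧ a ^ 2 + b ^ 2 ∣ p := by
  obtain ⟨z, hz⟩ :=
    IsAlgClosed.exists_aeval_eq_zero ℂ p (natDegree_pos_iff_degree_pos.mp hdeg).ne'
  rcases eq_or_ne z.im 0 with him | him
  · have hroot : p.IsRoot z.re := by
      rw [show z = algebraMap ℝ ℂ z.re from Complex.ext rfl (by simp [him]),
        aeval_algebraMap_apply] at hz
      simpa using hz
    refine ⟨X - C z.re, 0, ?_, by simpa using sq_dvd_of_isRoot_of_nonneg hnn hroot⟩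
    simp
  · have hquad : ((X - C z.re) ^ 2 + C z.im ^ 2).natDegree = 2 := by compute_degree!
    refine ⟨X - C z.re, C z.im, hquad ▸ two_pos, ?_⟩
    convert p.quadratic_dvd_of_aeval_eq_zero_im_ne_zero hz him using 1
    rw [Complex.sq_norm, Complex.normSq_apply]
    simp only [map_add, map_mul, map_ofNat]
    ring

theorem exists_sq_add_sq_of_nonneg (p : ℝ[X]) (hnn : ∀ x, 0 ≤ p.eval x) :
    ∃ a b : ℝ[X], p = a ^ 2 + b ^ 2 := by
  induction h : p.natDegree using Nat.strong_induction_on generalizing p with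
  | _ n ih =>
  rcases Nat.eq_zero_or_pos n with rfl | hpos
  · have hc : 0 ≤ p.coeff 0 := by
      have := hnn 0
      rwa [eq_C_of_natDegree_eq_zero h, eval_C] at this
    refine ⟨C √(p.coeff 0), 0, ?_⟩
    rw [← C_pow, Real.sq_sqrt hc, ← eq_C_of_natDegree_eq_zero h]
    ring
  obtain ⟨a, b, hdeg, s, rfl⟩ := exists_sq_add_sq_dvd_of_nonneg hnn (h ▸ hpos)
  have hq0 : a ^ 2 + b ^ 2 ≠ 0 := ne_zero_of_natDegree_gt hdeg
  have hs0 : s ≠ 0 := by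
    rintro rfl
    simp only [mul_zero, natDegree_zero] at h
    omega
  have hlt : s.natDegree < n := by
    rw [← h, natDegree_mul hq0 hs0]
    omega
  have hsnn := eval_nonneg_of_mul_nonneg hq0 (eval_sq_add_sq_nonneg a b) hnn
  exact exists_sq_add_sq_mul ⟨a, b, rfl⟩ (ih _ hlt s hsnn rfl)

end Polynomial

theorem nonneg_iff_sum_two_squares_general (p : Polynomial ℝ) :
    (∀ x : ℝ, 0 ≤ p.eval x) ↔ ∃ a b : Polynomial ℝ, p = a ^ 2 + b ^ 2 := by
  refine ⟨exists_sq_add_sq_of_nonneg p, ?_⟩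
  rintro ⟨a, b, rfl⟩
  exact eval_sq_add_sq_nonneg a b

/-- A nonzero univariate real polynomial is nonnegative on ℝ if and only if
it is a sum of two squares of polynomials. -/
theorem nonneg_iff_sum_two_squares (p : Polynomial ℝ) (hp : p ≠ 0) :
    (∀ x : ℝ, 0 ≤ p.eval x) ↔ ∃ a b : Polynomial ℝ, p = a ^ 2 + b ^ 2 :=
  nonneg_iff_sum_two_squares_general p
end

section
/- The Motzkin polynomial m(x,y) = 1 − 3x²y² + x²y⁴ + x⁴y² is not a sum of squares of polynomials in ℝ[x,y]. -/
/-!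
View `ℝ[x,y]` as `ℝ[y][x]`. Over a formally real coefficient ring the leading coefficients of a
sum of squares cannot cancel, so if `m = ∑ hᵢ²` then each `hᵢ = aᵢ + bᵢ x + cᵢ x²` with
`∑ aᵢ² = 1` and `∑ cᵢ² = y²`; hence every `aᵢ` is constant and every `cᵢ` is a multiple of `y`.
The `x²`-coefficient gives `∑ (2 aᵢ cᵢ + bᵢ²) = y⁴ - 3y²`. Each `aᵢ cᵢ` is odd in `y`, so adding
the evaluations at `y = 1` and `y = -1` yields `∑ (bᵢ(1)² + bᵢ(-1)²) = -4`, which is absurd.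
-/

open MvPolynomial

/-- The Motzkin polynomial `1 − 3x²y² + x²y⁴ + x⁴y²`. -/
noncomputable def motzkin : MvPolynomial (Fin 2) ℝ :=
  1 - 3 * X 0 ^ 2 * X 1 ^ 2 + X 0 ^ 2 * X 1 ^ 4 + X 0 ^ 4 * X 1 ^ 2

variable {R S F ι : Type*}

theorem IsSumSq.exists_fin_sum_mul_self [AddCommMonoid R] [Mul R] {s : R} (hs : IsSumSq s) :
    ∃ (n : ℕ) (a : Fin n → R), s = ∑ i, a i * a i := by
  induction hs with
  | zero => exact ⟨0, Fin.elim0, by simp⟩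
  | sq_add a _ ih =>
    obtain ⟨n, b, rfl⟩ := ih
    exact ⟨n + 1, Fin.cons a b, by simp [Fin.sum_univ_succ]⟩

theorem IsSumSq.map [NonUnitalNonAssocSemiring R] [NonUnitalNonAssocSemiring S] [FunLike F R S]
    [NonUnitalRingHomClass F R S] (f : F) {s : R} (hs : IsSumSq s) : IsSumSq (f s) := by
  induction hs with
  | zero => simp
  | sq_add a _ ih => simpa using ih.sq_add (f a)

theorem IsFormallyReal.eq_zero_of_sum_mul_self_eq_zero [Ring R] [IsFormallyReal R]
    {I : Finset ι} {a : ι → R} (h : ∑ i ∈ I, a i * a i = 0) {i : ι} (hi : i ∈ I) : a i = 0 := by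
  classical
  rw [← Finset.add_sum_erase I _ hi] at h
  have hsq := eq_zero_of_add_right (IsSumSq.mul_self (a i)) (IsSumSq.sum_mul_self _ _) h
  exact eq_zero_of_pow_eq_zero (n := 2) (by rwa [sq])

namespace Polynomial

section CommRing

variable [CommRing R] {I : Finset ι} {p : ι → R[X]} {d : ℕ}

theorem coeff_sum_mul_self_of_natDegree_le (hp : ∀ i ∈ I, (p i).natDegree ≤ d) :
    (∑ i ∈ I, p i * p i).coeff (2 * d) = ∑ i ∈ I, (p i).coeff d * (p i).coeff d := by
  rw [finsetSum_coeff, two_mul]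
  exact Finset.sum_congr rfl fun i hi => coeff_mul_add_eq_of_natDegree_le (hp i hi) (hp i hi)

theorem coeff_mul_self_two (q : R[X]) :
    (q * q).coeff 2 = 2 * q.coeff 0 * q.coeff 2 + q.coeff 1 * q.coeff 1 := by
  rw [coeff_mul, Finset.Nat.sum_antidiagonal_eq_sum_range_succ_mk]
  simp only [Finset.sum_range_succ, Finset.sum_range_zero]
  ring

variable [IsFormallyReal R]

theorem natDegree_le_of_natDegree_sum_mul_self_le (h : (∑ i ∈ I, p i * p i).natDegree ≤ 2 * d)
    {i : ι} (hi : i ∈ I) : (p i).natDegree ≤ d := by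
  obtain ⟨j, hj, hmax⟩ := I.exists_max_image (fun i => (p i).natDegree) ⟨i, hi⟩
  by_contra! hlt
  have hsum : ∑ k ∈ I, (p k).coeff (p j).natDegree * (p k).coeff (p j).natDegree = 0 := by
    rw [← coeff_sum_mul_self_of_natDegree_le hmax]
    exact coeff_eq_zero_of_natDegree_lt (by linarith [hmax i hi])
  have hlead : (p j).leadingCoeff = 0 := IsFormallyReal.eq_zero_of_sum_mul_self_eq_zero hsum hj
  have := hmax i hi
  simp only [leadingCoeff_eq_zero.mp hlead, natDegree_zero] at this
  omega

instance : IsFormallyReal R[X] :=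
  .of_eq_zero_of_eq_zero_of_mul_self_add fun {s a} hs h => by
    obtain ⟨n, b, rfl⟩ := hs.exists_fin_sum_mul_self
    let q : Fin (n + 1) → R[X] := Fin.cons a b
    have hq : ∑ i, q i * q i = 0 := by simpa [q, Fin.sum_univ_succ] using h
    have hconst : q 0 = C ((q 0).coeff 0) :=
      eq_C_of_natDegree_le_zero
        (natDegree_le_of_natDegree_sum_mul_self_le (by simp [hq]) (Finset.mem_univ 0))
    have hcoeff : ∑ i, (q i).coeff 0 * (q i).coeff 0 = 0 := by
      simp [← mul_coeff_zero, ← finsetSum_coeff, hq]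
    have hzero := IsFormallyReal.eq_zero_of_sum_mul_self_eq_zero hcoeff (Finset.mem_univ 0)
    simp only [q, Fin.cons_zero] at hconst hzero
    rw [hconst, hzero, map_zero]

end CommRing

variable (R) in
/-- The Motzkin polynomial as a polynomial in `x` over `R[y]`. -/
noncomputable def motzkinIter [CommRing R] : R[X][X] :=
  C (X ^ 2) * X ^ 4 + C (X ^ 4 - 3 * X ^ 2) * X ^ 2 + 1

theorem aeval_motzkin : MvPolynomial.aeval ![(X : ℝ[X][X]), C X] motzkin = motzkinIter ℝ := by
  simp [motzkin, motzkinIter, map_ofNat]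
  ring

section OrderedRing

variable [CommRing R] [LinearOrder R] [IsStrictOrderedRing R]

theorem sum_two_mul_add_mul_self_ne_X_pow_four_sub {I : Finset ι} {a b c : ι → R[X]}
    (ha : ∑ i ∈ I, a i * a i = 1) (hc : ∑ i ∈ I, c i * c i = X ^ 2) :
    ∑ i ∈ I, (2 * a i * c i + b i * b i) ≠ X ^ 4 - 3 * X ^ 2 := by
  intro hb
  have hc0 : ∑ i ∈ I, (c i).coeff 0 * (c i).coeff 0 = 0 := by
    simp [← mul_coeff_zero, ← finsetSum_coeff, hc]
  have hodd : ∀ i ∈ I, (a i * c i).eval (-1) = -(a i * c i).eval 1 := by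
    intro i hi
    rw [eq_C_of_natDegree_le_zero
        (natDegree_le_of_natDegree_sum_mul_self_le (p := a) (by simp [ha]) hi),
      eq_X_add_C_of_natDegree_le_one
        (natDegree_le_of_natDegree_sum_mul_self_le (p := c) (d := 1) (by simp [hc]) hi),
      IsFormallyReal.eq_zero_of_sum_mul_self_eq_zero hc0 hi]
    simp
  have hpos : ∀ i ∈ I, 0 ≤ (2 * a i * c i + b i * b i).eval 1 +
      (2 * a i * c i + b i * b i).eval (-1) := by
    intro i hi
    have := hodd i hi
    simp only [eval_add, eval_mul, eval_ofNat] at this ⊢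
    nlinarith [mul_self_nonneg ((b i).eval 1), mul_self_nonneg ((b i).eval (-1))]
  have hsum := Finset.sum_nonneg hpos
  rw [Finset.sum_add_distrib, ← eval_finsetSum, ← eval_finsetSum, hb] at hsum
  norm_num at hsum

theorem not_isSumSq_motzkinIter : ¬ IsSumSq (motzkinIter R) := by
  intro hs
  obtain ⟨n, p, h⟩ := hs.exists_fin_sum_mul_self
  have hdeg : ∀ i ∈ Finset.univ, (p i).natDegree ≤ 2 := fun i hi =>
    natDegree_le_of_natDegree_sum_mul_self_le (by rw [← h, motzkinIter]; compute_degree) hi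
  have hcoeff (k : ℕ) : ∑ i, (p i * p i).coeff k = (motzkinIter R).coeff k := by
    rw [h, finsetSum_coeff]
  refine sum_two_mul_add_mul_self_ne_X_pow_four_sub (I := Finset.univ)
    (a := fun i => (p i).coeff 0) (b := fun i => (p i).coeff 1) (c := fun i => (p i).coeff 2)
    ?_ ?_ ?_
  · simpa [mul_coeff_zero, motzkinIter] using hcoeff 0
  · rw [← coeff_sum_mul_self_of_natDegree_le hdeg, ← h]
    simp only [motzkinIter, coeff_add, coeff_C_mul_X_pow, coeff_one]
    norm_num
  · have h2 := hcoeff 2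
    simp only [coeff_mul_self_two, motzkinIter, coeff_add, coeff_C_mul_X_pow, coeff_one] at h2
    simpa using h2

end OrderedRing

end Polynomial

/-- The Motzkin polynomial is not a sum of squares in ℝ[x,y]. -/
theorem motzkin_not_sumSq : ¬ IsSumSq motzkin := fun hm =>
  Polynomial.not_isSumSq_motzkinIter (Polynomial.aeval_motzkin ▸ hm.map (aeval _))
end
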